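/- For θ ∈ [0, 2π], α real with |α| ≤ 1/h, and h a positive integer, the sum F_α(h, θ) = Σ_{n=1}^h cos(2nθ)/(n q^{2nα + n/(h log q)}) satisfies F_α(h, θ) = log min{h, 1/min(2θ mod 2π, 2π − (2θ mod 2π))} + O(1), with an absolute implied constant (depending only on q). -/

import Mathlib

/-!
Let `δ ∈ [0, π]` be the distance of `2θ` to `2πℤ` and `β = 2α log q + 1/h`. The `n`-th term is
`cos(nδ) e^(-nβ) / n`, and `h|β| ≤ 2 log q + 1`, so replacing `e^(-nβ)` by `1` costs `O(1)`.
Split `∑_{n ≤ h} cos(nδ)/n` at `m = ⌊min(h, 1/δ)⌋`. For `n ≤ m` we have `cos(nδ) = 1 + O(nδ)`,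
so the head is the harmonic number `H_m = log min(h, 1/δ) + O(1)`. The tail is `O(1)` by Abel
summation: the partial sums of `cos(nδ)` are bounded by `1/sin(δ/2) ≤ π/δ`, and `1/(m+1) ≤ δ`.
-/

open Finset Real

theorem Real.abs_exp_sub_one_le_abs_mul_exp_abs (x : ℝ) : |exp x - 1| ≤ |x| * exp |x| := by
  rcases le_or_gt 0 x with hx | hx
  · have h1 : 1 - x ≤ exp (-x) := by linarith [add_one_le_exp (-x)]
    have h2 : exp (-x) * exp x = 1 := by rw [← exp_add, neg_add_cancel, exp_zero]
    rw [abs_of_nonneg hx, abs_of_nonneg (sub_nonneg.2 (one_le_exp hx))]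
    nlinarith [exp_pos x]
  · rw [abs_of_neg hx, abs_of_nonpos (sub_nonpos.2 (exp_le_one_iff.2 hx.le))]
    nlinarith [add_one_le_exp x, one_le_exp (neg_nonneg.2 hx.le)]

theorem Real.inv_sin_half_le_pi_div {δ : ℝ} (hδ : 0 < δ) (hδπ : δ ≤ π) :
    (sin (δ / 2))⁻¹ ≤ π / δ := by
  have h := mul_le_sin (x := δ / 2) (by positivity) (by linarith)
  rw [show 2 / π * (δ / 2) = δ / π by field_simp] at h
  simpa only [inv_div] using inv_anti₀ (by positivity) h

theorem Real.abs_sum_range_cos_mul_le {δ : ℝ} (hδ : sin (δ / 2) ≠ 0) (N : ℕ) :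
    |∑ n ∈ range N, cos (n * δ)| ≤ 1 / |sin (δ / 2)| := by
  have h := sin_mul_sum_cos N δ 0
  simp only [add_zero, mul_comm δ] at h
  rw [le_div_iff₀ (abs_pos.2 hδ), mul_comm, ← abs_mul, h, abs_mul]
  exact mul_le_one₀ (abs_sin_le_one _) (abs_nonneg _) (abs_cos_le_one _)

theorem cos_nat_mul_abs_sub_two_pi_mul_int (n : ℕ) (x : ℝ) (k : ℤ) :
    cos (n * |x - 2 * π * k|) = cos (n * x) := by
  rw [← Nat.abs_cast n, ← abs_mul, cos_abs, Nat.abs_cast,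
    show n * (x - 2 * π * k) = n * x - ((n * k : ℤ) : ℝ) * (2 * π) by push_cast; ring,
    cos_sub_int_mul_two_pi]

theorem abs_two_mul_sub_two_pi_mul_round_le (θ : ℝ) :
    |2 * θ - 2 * π * (round (θ / π) : ℤ)| ≤ π := by
  have h := abs_sub_round (θ / π)
  rw [show 2 * θ - 2 * π * (round (θ / π) : ℤ) = 2 * π * (θ / π - round (θ / π)) by
      field_simp, abs_mul, abs_of_pos (by positivity)]
  nlinarith [pi_pos]

theorem abs_sum_Ico_mul_le_of_antitoneOn {a b : ℕ → ℝ} {M : ℝ} {m : ℕ}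
    (hA : ∀ N, |∑ n ∈ range N, a n| ≤ M) (hb : AntitoneOn b (Set.Ici m)) (hb0 : ∀ n, 0 ≤ b n)
    (N : ℕ) : |∑ n ∈ Ico m N, a n * b n| ≤ 2 * M * b m := by
  have hM : 0 ≤ M := (abs_nonneg _).trans (hA 0)
  rcases le_or_gt N m with hNm | hmN
  · rw [Ico_eq_empty_of_le hNm, sum_empty, abs_zero]
    exact mul_nonneg (mul_nonneg zero_le_two hM) (hb0 m)
  have hstep : ∀ i ∈ Ico m (N - 1), b (i + 1) ≤ b i := fun i hi ↦
    hb (Set.mem_Ici.2 (mem_Ico.1 hi).1) (Set.mem_Ici.2 ((mem_Ico.1 hi).1.trans i.le_succ))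
      i.le_succ
  have htele : ∑ i ∈ Ico m (N - 1), (b i - b (i + 1)) = b m - b (N - 1) := by
    rw [← neg_sub, ← Finset.sum_Ico_sub b (Nat.le_sub_one_of_lt hmN), ← sum_neg_distrib]
    simp only [neg_sub]
  have hdiff : |∑ i ∈ Ico m (N - 1), (b (i + 1) - b i) * ∑ n ∈ range (i + 1), a n| ≤
      (b m - b (N - 1)) * M := by
    rw [← htele, sum_mul]
    refine (abs_sum_le_sum_abs _ _).trans (sum_le_sum fun i hi ↦ ?_)
    rw [abs_mul, abs_of_nonpos (sub_nonpos.2 (hstep i hi)), neg_sub]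
    exact mul_le_mul_of_nonneg_left (hA _) (sub_nonneg.2 (hstep i hi))
  simp_rw [mul_comm (a _), ← smul_eq_mul (b _)]
  rw [sum_Ico_by_parts b a hmN]
  simp only [smul_eq_mul]
  calc _ ≤ b (N - 1) * M + b m * M + (b m - b (N - 1)) * M := by
        refine (abs_sub _ _).trans (add_le_add ((abs_sub _ _).trans (add_le_add ?_ ?_)) hdiff)
        · rw [abs_mul, abs_of_nonneg (hb0 _)]
          exact mul_le_mul_of_nonneg_left (hA N) (hb0 _)
        · rw [abs_mul, abs_of_nonneg (hb0 _)]
          exact mul_le_mul_of_nonneg_left (hA m) (hb0 _)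
    _ = 2 * M * b m := by ring

theorem abs_harmonic_floor_sub_log_le {c y : ℝ} (hc : 0 < c) (hcy : c ≤ y) :
    |harmonic ⌊y⌋₊ - log y| ≤ 1 + |log c| := by
  rcases le_or_gt 1 y with hy | hy
  · have h1 := log_le_harmonic_floor y (by linarith)
    have h2 := harmonic_floor_le_one_add_log y hy
    rw [abs_le]
    constructor <;> linarith [abs_nonneg (log c)]
  · rw [Nat.floor_eq_zero.2 hy, harmonic_zero, Rat.cast_zero, zero_sub, abs_neg,
      abs_of_neg (log_neg (hc.trans_le hcy) hy)]
    have := log_le_log hc hcy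
    linarith [neg_le_abs (log c)]

theorem nat_mul_abs_two_mul_mul_add_one_div_le {h : ℕ} {α L : ℝ} (hL : 0 ≤ L)
    (hα : |α| ≤ 1 / h) : h * |2 * α * L + 1 / h| ≤ 2 * L + 1 := by
  rcases Nat.eq_zero_or_pos h with rfl | hh
  · simp only [Nat.cast_zero, zero_mul]
    linarith
  have hh0 : (0 : ℝ) < h := by exact_mod_cast hh
  have hαh : h * |α| ≤ 1 := by rwa [le_div_iff₀ hh0, mul_comm] at hα
  calc h * |2 * α * L + 1 / h| ≤ h * (2 * |α| * L + 1 / h) := by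
        gcongr
        refine (abs_add_le _ _).trans_eq ?_
        rw [abs_mul, abs_mul, abs_two, abs_of_nonneg hL, abs_of_pos (one_div_pos.2 hh0)]
    _ = 2 * (h * |α|) * L + 1 := by field_simp
    _ ≤ 2 * L + 1 := by nlinarith

theorem abs_sum_Icc_div_mul_exp_sub_le {c : ℕ → ℝ} (hc : ∀ n, |c n| ≤ 1) (β : ℝ) (h : ℕ) :
    |∑ n ∈ Icc 1 h, c n / n * exp (-(n * β)) - ∑ n ∈ Icc 1 h, c n / n| ≤
      h * |β| * exp (h * |β|) := by
  rw [← sum_sub_distrib]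
  refine (abs_sum_le_sum_abs _ _).trans ?_
  have hterm : ∀ n ∈ Icc 1 h, |c n / n * exp (-(n * β)) - c n / n| ≤ |β| * exp (h * |β|) := by
    intro n hn
    have hn0 : (0 : ℝ) < n := by exact_mod_cast (mem_Icc.1 hn).1
    have hnh : (n : ℝ) ≤ h := by exact_mod_cast (mem_Icc.1 hn).2
    have hexp : |exp (-(n * β)) - 1| ≤ n * |β| * exp (h * |β|) := by
      refine (abs_exp_sub_one_le_abs_mul_exp_abs _).trans ?_
      rw [abs_neg, abs_mul, Nat.abs_cast]
      gcongr
    rw [← mul_sub_one, abs_mul, abs_div, Nat.abs_cast, div_mul_eq_mul_div, div_le_iff₀ hn0]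
    calc |c n| * |exp (-(n * β)) - 1| ≤ 1 * (n * |β| * exp (h * |β|)) :=
          mul_le_mul (hc n) hexp (abs_nonneg _) zero_le_one
      _ = |β| * exp (h * |β|) * n := by ring
  calc _ ≤ ∑ n ∈ Icc 1 h, |β| * exp (h * |β|) := sum_le_sum hterm
    _ = h * |β| * exp (h * |β|) := by simp [mul_assoc]

theorem abs_sum_Icc_cos_mul_div_sub_harmonic_le (δ : ℝ) (m : ℕ) :
    |∑ n ∈ Icc 1 m, cos (n * δ) / n - harmonic m| ≤ m * |δ| := by
  simp only [harmonic_eq_sum_Icc, Rat.cast_sum, Rat.cast_inv, Rat.cast_natCast, ← sum_sub_distrib]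
  refine (abs_sum_le_sum_abs _ _).trans ?_
  calc _ ≤ ∑ n ∈ Icc 1 m, |δ| := sum_le_sum fun n hn ↦ ?_
    _ = m * |δ| := by simp
  have hn0 : (0 : ℝ) < n := by exact_mod_cast (mem_Icc.1 hn).1
  have := abs_cos_sub_cos_le (n * δ) 0
  rw [cos_zero, sub_zero, abs_mul, Nat.abs_cast] at this
  rw [inv_eq_one_div, ← sub_div, abs_div, Nat.abs_cast, div_le_iff₀ hn0]
  linarith

theorem abs_sum_Ico_cos_mul_div_le {δ : ℝ} (hδ : 0 < δ) (hδπ : δ ≤ π) {m : ℕ} (hm : 0 < m)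
    (N : ℕ) : |∑ n ∈ Ico m N, cos (n * δ) / n| ≤ 2 * π / (m * δ) := by
  have hsin : 0 < sin (δ / 2) :=
    sin_pos_of_pos_of_lt_pi (by positivity) (by linarith [pi_pos])
  have hA (N : ℕ) : |∑ n ∈ range N, cos (n * δ)| ≤ π / δ := by
    refine (abs_sum_range_cos_mul_le hsin.ne' N).trans ?_
    rw [abs_of_pos hsin, one_div]
    exact inv_sin_half_le_pi_div hδ hδπ
  have hb : AntitoneOn (fun n : ℕ ↦ (n : ℝ)⁻¹) (Set.Ici m) := fun x hx y _ hxy ↦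
    inv_anti₀ (by exact_mod_cast hm.trans_le hx) (by exact_mod_cast hxy)
  simp_rw [div_eq_mul_inv (cos _)]
  refine (abs_sum_Ico_mul_le_of_antitoneOn hA hb (fun n ↦ by positivity) N).trans_eq ?_
  field_simp

noncomputable def truncatedInv (h : ℕ) (δ : ℝ) : ℝ := if δ = 0 then h else min (h : ℝ) (1 / δ)

theorem truncatedInv_le (h : ℕ) (δ : ℝ) : truncatedInv h δ ≤ h := by
  unfold truncatedInv
  split_ifs
  exacts [le_rfl, min_le_left _ _]

theorem inv_pi_le_truncatedInv {h : ℕ} (hh : 1 ≤ h) {δ : ℝ} (hδ0 : 0 ≤ δ) (hδπ : δ ≤ π) :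
    π⁻¹ ≤ truncatedInv h δ := by
  have hh' : (1 : ℝ) ≤ h := by exact_mod_cast hh
  have hπ : π⁻¹ ≤ 1 := inv_le_one_of_one_le₀ (by linarith [pi_gt_three])
  unfold truncatedInv
  split_ifs with hδ
  · linarith
  · rw [one_div]
    exact le_min (by linarith) (inv_anti₀ (lt_of_le_of_ne hδ0 (Ne.symm hδ)) hδπ)

theorem truncatedInv_mul_le_one (h : ℕ) {δ : ℝ} (hδ0 : 0 ≤ δ) : truncatedInv h δ * δ ≤ 1 := by
  unfold truncatedInv
  split_ifs with hδ
  · simp [hδ]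
  · calc min (h : ℝ) (1 / δ) * δ ≤ 1 / δ * δ := by gcongr; exact min_le_right _ _
      _ = 1 := one_div_mul_cancel hδ

theorem truncatedInv_mul_eq_one {h : ℕ} {δ : ℝ} (hlt : truncatedInv h δ < h) :
    truncatedInv h δ * δ = 1 := by
  unfold truncatedInv at *
  split_ifs at * with hδ
  · exact absurd hlt (lt_irrefl _)
  · have hδh : 1 / δ < h := (min_lt_iff.1 hlt).resolve_left (lt_irrefl _)
    rw [min_eq_right hδh.le, one_div_mul_cancel hδ]

theorem abs_sum_Icc_cos_mul_div_sub_log_truncatedInv_le {h : ℕ} (hh : 1 ≤ h) {δ : ℝ}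
    (hδ0 : 0 ≤ δ) (hδπ : δ ≤ π) :
    |∑ n ∈ Icc 1 h, cos (n * δ) / n - log (truncatedInv h δ)| ≤ 2 + log π + 2 * π := by
  set L := truncatedInv h δ
  set m := ⌊L⌋₊
  have hL0 : 0 < L := (inv_pos.2 pi_pos).trans_le (inv_pi_le_truncatedInv hh hδ0 hδπ)
  have hmh : m ≤ h := Nat.floor_le_of_le (truncatedInv_le h δ)
  have hsplit : ∑ n ∈ Icc 1 h, cos (n * δ) / n =
      ∑ n ∈ Icc 1 m, cos (n * δ) / n + ∑ n ∈ Ico (m + 1) (h + 1), cos (n * δ) / n := by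
    simp only [← Finset.Ico_add_one_right_eq_Icc]
    exact (sum_Ico_consecutive _ (Nat.le_add_left 1 m) (Nat.succ_le_succ hmh)).symm
  have hhead : |∑ n ∈ Icc 1 m, cos (n * δ) / n - harmonic m| ≤ 1 := by
    refine (abs_sum_Icc_cos_mul_div_sub_harmonic_le δ m).trans ?_
    rw [abs_of_nonneg hδ0]
    calc (m : ℝ) * δ ≤ L * δ := by gcongr; exact Nat.floor_le hL0.le
      _ ≤ 1 := truncatedInv_mul_le_one h hδ0
  have hharm : |(harmonic m : ℝ) - log L| ≤ 1 + log π := by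
    have := abs_harmonic_floor_sub_log_le (inv_pos.2 pi_pos) (inv_pi_le_truncatedInv hh hδ0 hδπ)
    rwa [log_inv, abs_neg, abs_of_pos (log_pos (by linarith [pi_gt_three]))] at this
  have htail : |∑ n ∈ Ico (m + 1) (h + 1), cos (n * δ) / n| ≤ 2 * π := by
    rcases hmh.eq_or_lt with hmh | hmh
    · simp [hmh, pi_pos.le]
    have hLδ : L * δ = 1 := truncatedInv_mul_eq_one ((Nat.floor_lt hL0.le).1 hmh)
    have hδ : 0 < δ := lt_of_le_of_ne hδ0 (by rintro rfl; simp at hLδ)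
    have hmδ : 1 ≤ (m + 1 : ℕ) * δ := by
      rw [← hLδ]; push_cast; gcongr; exact (Nat.lt_floor_add_one L).le
    refine (abs_sum_Ico_cos_mul_div_le hδ hδπ m.succ_pos _).trans ?_
    rw [div_le_iff₀ (by linarith)]
    nlinarith [pi_pos]
  rw [hsplit]
  calc _ = |(∑ n ∈ Icc 1 m, cos (n * δ) / n - harmonic m) + (harmonic m - log L) +
        ∑ n ∈ Ico (m + 1) (h + 1), cos (n * δ) / n| := by congr 1; ring
    _ ≤ _ := (abs_add_three _ _ _).trans (by linarith)

/-- For `θ ∈ [0,2π]`, `|α| ≤ 1/h`, the sum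
`F_α(h,θ) = ∑_{n=1}^h cos(2nθ)/(n q^{2nα + n/(h log q)})` satisfies
`F_α(h,θ) = log min{h, 1/\bar{2θ}} + O(1)`, where `\bar{2θ}` is the distance from
`2θ` to the nearest multiple of `2π` (and the minimum is `h` when `\bar{2θ} = 0`). -/
theorem cosine_sum_asymptotic (q : ℝ) (hq : 1 < q) :
    ∃ C : ℝ, 0 < C ∧ ∀ h : ℕ, 1 ≤ h → ∀ θ ∈ Set.Icc (0 : ℝ) (2 * Real.pi),
      ∀ α : ℝ, |α| ≤ 1 / h →
      |(∑ n ∈ Finset.Icc 1 h,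
          Real.cos (2 * n * θ) /
            (n * q ^ (2 * n * α + n / (h * Real.log q)))) -
        Real.log
          (if |2 * θ - 2 * Real.pi * (round (θ / Real.pi) : ℤ)| = 0 then (h : ℝ)
           else min (h : ℝ) (1 / |2 * θ - 2 * Real.pi * (round (θ / Real.pi) : ℤ)|))| ≤
      C := by
  have hlogq : 0 < log q := log_pos hq
  have hlogπ : 0 < log π := log_pos (by linarith [pi_gt_three])
  set K := 2 * log q + 1
  refine ⟨K * exp K + (2 + log π + 2 * π), by positivity, fun h hh θ _ α hα ↦ ?_⟩
  set δ := |2 * θ - 2 * π * (round (θ / π) : ℤ)|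
  set β := 2 * α * log q + 1 / h with hβ_def
  have hβ : h * |β| ≤ K := nat_mul_abs_two_mul_mul_add_one_div_le hlogq.le hα
  have hsummand : ∀ n ∈ Icc 1 h, cos (2 * n * θ) / (n * q ^ (2 * n * α + n / (h * log q))) =
      cos (n * δ) / n * exp (-(n * β)) := by
    intro n _
    rw [cos_nat_mul_abs_sub_two_pi_mul_int, rpow_def_of_pos (by linarith), exp_neg, hβ_def]
    field_simp
  change |_ - log (truncatedInv h δ)| ≤ _
  rw [sum_congr rfl hsummand]
  have hpert := abs_sum_Icc_div_mul_exp_sub_le (c := fun n ↦ cos (n * δ))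
    (fun _ ↦ abs_cos_le_one _) β h
  have hcore : |∑ n ∈ Icc 1 h, cos (n * δ) / n - log (truncatedInv h δ)| ≤ 2 + log π + 2 * π :=
    abs_sum_Icc_cos_mul_div_sub_log_truncatedInv_le hh (abs_nonneg _)
      (abs_two_mul_sub_two_pi_mul_round_le θ)
  have hK : h * |β| * exp (h * |β|) ≤ K * exp K := by gcongr
  have := abs_sub_le (∑ n ∈ Icc 1 h, cos (n * δ) / n * exp (-(n * β)))
    (∑ n ∈ Icc 1 h, cos (n * δ) / n) (log (truncatedInv h δ))
  linarith
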